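/- arXiv:1105.1633 — 6 statements merged into one kernel-verified Lean document; each statement's English description precedes it below -/
import Mathlib

section
/- (Lemma 1.) Assume the slicing setup and the abstraction α. For every run ρ = s₀ ι₀ s₁ ι₁ ⋯ ι_{k−1} s_k of P there exist states s'₁, …, s'_k such that: ρ' = s₀ α(ι₀) s'₁ α(ι₁) ⋯ α(ι_{k−1}) s'_k is a run of α(P); s'_j agrees with s_j on every variable of W, for every j ≤ k; and TR(ρ) = TR(ρ'), i.e., for every j < k, refs(α(ι_j))(s'_j) = refs(ι_j)(s_j) and exec(α(ι_j))(s'_j) = exec(ι_j)(s_j). -/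
/-!
Each `α ι` simulates `ι` on states that agree on `W`: inside the slice this is the
`W`-bisimulation property (ii), and outside it both `ι` and `α ι` fix `W \ {pc}` and
advance `pc` by `next`, with empty references and a true execution flag. The abstract run
is then built from the concrete one step by step, keeping agreement on `W` as the invariant.
-/

open Set

theorem exists_run_of_forward_simulation {σ : Type*} (R : σ → σ → Prop)
    (step : ℕ → σ → σ → Prop) {k : ℕ} {s : ℕ → σ} {s₀' : σ} (h₀ : R (s 0) s₀')
    (hsim : ∀ j < k, ∀ t, R (s j) t → ∃ u, step j t u ∧ R (s (j + 1)) u) :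
    ∃ s' : ℕ → σ, s' 0 = s₀' ∧ (∀ j ≤ k, R (s j) (s' j)) ∧
      ∀ j < k, step j (s' j) (s' (j + 1)) := by
  induction k with
  | zero => exact ⟨fun _ => s₀', rfl, fun j hj => by rwa [Nat.le_zero.mp hj], by simp⟩
  | succ k ih =>
    obtain ⟨s', hs'₀, hR, hstep⟩ := ih fun j hj => hsim j (Nat.lt_succ_of_lt hj)
    obtain ⟨u, hu, hRu⟩ := hsim k k.lt_succ_self (s' k) (hR k le_rfl)
    refine ⟨Function.update s' (k + 1) u, by simpa using hs'₀, fun j hj => ?_, fun j hj => ?_⟩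
    · rcases Nat.le_succ_iff.mp hj with hj | rfl
      · simpa [(Nat.lt_succ_of_le hj).ne] using hR j hj
      · simpa using hRu
    · rcases Nat.lt_succ_iff_lt_or_eq.mp hj with hj | rfl
      · simpa [hj.ne, (Nat.lt_succ_of_lt hj).ne] using hstep j hj
      · simpa using hu

section Simulation

variable {Var D LI : Type} (lbl : LI → D) (step : LI → (Var → D) → (Var → D) → Prop)
  (refs : LI → (Var → D) → Finset D) (exec : LI → (Var → D) → Bool) (W : Set Var)

def SimulatesOn (ι ι' : LI) : Prop :=
  lbl ι' = lbl ι ∧ ∀ ⦃s s'⦄, EqOn s s' W →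
    refs ι' s' = refs ι s ∧ exec ι' s' = exec ι s ∧
      ∀ ⦃t⦄, step ι s t → ∃ t', step ι' s' t' ∧ EqOn t t' W

variable {lbl step refs exec W}

theorem simulatesOn_self {ι : LI}
    (hdep : ∀ s s', EqOn s s' W → refs ι s = refs ι s' ∧ exec ι s = exec ι s')
    (hbisim : ∀ s s' t, EqOn s s' W → step ι s t → ∃ t', step ι s' t' ∧ EqOn t t' W) :
    SimulatesOn lbl step refs exec W ι ι := by
  refine ⟨rfl, fun s s' h => ?_⟩
  obtain ⟨hrefs, hexec⟩ := hdep s' s h.symm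
  exact ⟨hrefs, hexec, fun t => hbisim s s' t h⟩

theorem eqOn_advance_pc [DecidableEq Var] {pc : Var} {next : D → D}
    {f : (Var → D) → Var → D}
    (hf : ∀ s, (∀ v ∈ W, v ≠ pc → f s v = s v) ∧ f s pc = next (s pc))
    {s s' : Var → D} (h : EqOn s s' W) :
    EqOn (f s) (fun v => if v = pc then next (s' pc) else s' v) W := by
  intro v hv
  by_cases hpc : v = pc
  · subst hpc
    simp [(hf s).2, h hv]
  · simp [hpc, (hf s).1 v hv hpc, h hv]

theorem simulatesOn_skip [DecidableEq Var] {pc : Var} {next : D → D} {ι ι' : LI}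
    (hlbl : lbl ι' = lbl ι)
    (hskip : ∀ s, refs ι s = ∅ ∧ exec ι s = true)
    (hskip' : ∀ s, refs ι' s = ∅ ∧ exec ι' s = true)
    {f : (Var → D) → Var → D} (hstep : ∀ s t, step ι s t ↔ t = f s)
    (hf : ∀ s, (∀ v ∈ W, v ≠ pc → f s v = s v) ∧ f s pc = next (s pc))
    (hstep' : ∀ s t, step ι' s t ↔ t = fun v => if v = pc then next (s pc) else s v) :
    SimulatesOn lbl step refs exec W ι ι' := by
  refine ⟨hlbl, fun s s' h => ⟨?_, ?_, fun t ht => ?_⟩⟩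
  · rw [(hskip' s').1, (hskip s).1]
  · rw [(hskip' s').2, (hskip s).2]
  · rw [hstep] at ht
    exact ⟨_, (hstep' _ _).mpr rfl, ht ▸ eqOn_advance_pc hf h⟩

end Simulation

theorem lemma1_slice_to_abstract_general
    (Var D LI : Type)
    [DecidableEq Var] [DecidableEq LI]
    (pc : Var)
    (lbl : LI → D)
    (step : LI → (Var → D) → (Var → D) → Prop)
    (refs : LI → (Var → D) → Finset D)
    (exec : LI → (Var → D) → Bool)
    -- the program: finite set of labelled instructions with pairwise distinct labels
    (P : Finset LI)
    -- slicing setup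
    (Sl : Finset LI)
    (W : Set Var) (hpcW : pc ∈ W)
    (next : D → D)
    -- (i) instructions outside the slice
    (hNotSl : ∀ ι ∈ P, ι ∉ Sl →
      (∀ s, refs ι s = ∅ ∧ exec ι s = true) ∧
      ∃ f : (Var → D) → (Var → D),
        (∀ s t, step ι s t ↔ t = f s) ∧
        (∀ s, (∀ v ∈ W, v ≠ pc → f s v = s v) ∧ f s pc = next (s pc)))
    -- (ii) instructions in the slice
    (hSlDep : ∀ ι ∈ Sl, ∀ s s' : Var → D, (∀ v ∈ W, s v = s' v) →
      refs ι s = refs ι s' ∧ exec ι s = exec ι s')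
    (hSlBisim : ∀ ι ∈ Sl, ∀ s s' t : Var → D, (∀ v ∈ W, s v = s' v) →
      step ι s t → ∃ t', step ι s' t' ∧ ∀ v ∈ W, t v = t' v)
    -- the abstraction α
    (α : LI → LI)
    (hαSl : ∀ ι ∈ Sl, α ι = ι)
    (hαNotSl : ∀ ι ∈ P, ι ∉ Sl →
      lbl (α ι) = lbl ι ∧
      (∀ s, refs (α ι) s = ∅ ∧ exec (α ι) s = true) ∧
      (∀ s t : Var → D, step (α ι) s t ↔
        t = fun v => if v = pc then next (s pc) else s v))
    -- a run ρ = s₀ ι₀ s₁ ι₁ ⋯ ι_{k-1} s_k of P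
    (k : ℕ) (states : ℕ → Var → D) (instrs : ℕ → LI)
    (hrun : ∀ j < k, instrs j ∈ P ∧ lbl (instrs j) = states j pc ∧
      step (instrs j) (states j) (states (j + 1))) :
    ∃ states' : ℕ → Var → D,
      -- ρ' = s₀ α(ι₀) s'₁ α(ι₁) ⋯ α(ι_{k-1}) s'_k is a run of α(P)
      states' 0 = states 0 ∧
      (∀ j < k, α (instrs j) ∈ P.image α ∧
        lbl (α (instrs j)) = states' j pc ∧
        step (α (instrs j)) (states' j) (states' (j + 1))) ∧
      -- s'_j agrees with s_j on every variable of W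
      (∀ j ≤ k, ∀ v ∈ W, states' j v = states j v) ∧
      -- TR(ρ) = TR(ρ')
      (∀ j < k,
        refs (α (instrs j)) (states' j) = refs (instrs j) (states j) ∧
        exec (α (instrs j)) (states' j) = exec (instrs j) (states j)) := by
  have hsim : ∀ j < k, SimulatesOn lbl step refs exec W (instrs j) (α (instrs j)) := by
    intro j hj
    obtain ⟨hι, -⟩ := hrun j hj
    generalize instrs j = ι at hι ⊢
    by_cases hin : ι ∈ Sl
    · rw [hαSl ι hin]
      exact simulatesOn_self (hSlDep ι hin) (hSlBisim ι hin)
    · obtain ⟨hskip, f, hstep, hf⟩ := hNotSl ι hι hin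
      obtain ⟨hlbl, hskip', hstep'⟩ := hαNotSl ι hι hin
      exact simulatesOn_skip hlbl hskip hskip' hstep hf hstep'
  obtain ⟨states', h₀, hagree, hstep⟩ :=
    exists_run_of_forward_simulation (fun s s' => EqOn s s' W) (fun j => step (α (instrs j)))
      (s₀' := states 0) (fun _ _ => rfl)
      fun j hj _ h => ((hsim j hj).2 h).2.2 (hrun j hj).2.2
  refine ⟨states', h₀, fun j hj => ⟨Finset.mem_image_of_mem α (hrun j hj).1, ?_, hstep j hj⟩,
    fun j hj v hv => (hagree j hj hv).symm, fun j hj => ?_⟩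
  · rw [(hsim j hj).1, (hrun j hj).2.1, hagree j hj.le hpcW]
  · obtain ⟨hrefs, hexec, -⟩ := (hsim j hj).2 (hagree j hj.le)
    exact ⟨hrefs, hexec⟩

/-- Lemma 1: every run of `P` is matched by a run of the abstracted program `α(P)`
using the α-images of the same instructions, starting from the same state, agreeing
on the variables of `W`, and producing the same trace. -/
theorem lemma1_slice_to_abstract
    (Var D LI : Type) [Fintype Var] [Fintype D] [Fintype LI]
    [DecidableEq Var] [DecidableEq D] [DecidableEq LI]
    (pc : Var)
    (lbl : LI → D)
    (step : LI → (Var → D) → (Var → D) → Prop)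
    (refs : LI → (Var → D) → Finset D)
    (exec : LI → (Var → D) → Bool)
    -- the program: finite set of labelled instructions with pairwise distinct labels
    (P : Finset LI)
    (hlbl : ∀ ι ∈ P, ∀ ι' ∈ P, lbl ι = lbl ι' → ι = ι')
    -- slicing setup
    (Sl : Finset LI) (hSl : Sl ⊆ P)
    (W : Set Var) (hpcW : pc ∈ W)
    (next : D → D)
    -- (i) instructions outside the slice
    (hNotSl : ∀ ι ∈ P, ι ∉ Sl →
      (∀ s, refs ι s = ∅ ∧ exec ι s = true) ∧
      ∃ f : (Var → D) → (Var → D),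
        (∀ s t, step ι s t ↔ t = f s) ∧
        (∀ s, (∀ v ∈ W, v ≠ pc → f s v = s v) ∧ f s pc = next (s pc)))
    -- (ii) instructions in the slice
    (hSlDep : ∀ ι ∈ Sl, ∀ s s' : Var → D, (∀ v ∈ W, s v = s' v) →
      refs ι s = refs ι s' ∧ exec ι s = exec ι s')
    (hSlBisim : ∀ ι ∈ Sl, ∀ s s' t : Var → D, (∀ v ∈ W, s v = s' v) →
      step ι s t → ∃ t', step ι s' t' ∧ ∀ v ∈ W, t v = t' v)
    -- the abstraction α
    (α : LI → LI)
    (hαinj : ∀ ι ∈ P, ∀ ι' ∈ P, α ι = α ι' → ι = ι')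
    (hαSl : ∀ ι ∈ Sl, α ι = ι)
    (hαNotSl : ∀ ι ∈ P, ι ∉ Sl →
      lbl (α ι) = lbl ι ∧
      (∀ s, refs (α ι) s = ∅ ∧ exec (α ι) s = true) ∧
      (∀ s t : Var → D, step (α ι) s t ↔
        t = fun v => if v = pc then next (s pc) else s v))
    -- a run ρ = s₀ ι₀ s₁ ι₁ ⋯ ι_{k-1} s_k of P
    (k : ℕ) (states : ℕ → Var → D) (instrs : ℕ → LI)
    (hrun : ∀ j < k, instrs j ∈ P ∧ lbl (instrs j) = states j pc ∧
      step (instrs j) (states j) (states (j + 1))) :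
    ∃ states' : ℕ → Var → D,
      -- ρ' = s₀ α(ι₀) s'₁ α(ι₁) ⋯ α(ι_{k-1}) s'_k is a run of α(P)
      states' 0 = states 0 ∧
      (∀ j < k, α (instrs j) ∈ P.image α ∧
        lbl (α (instrs j)) = states' j pc ∧
        step (α (instrs j)) (states' j) (states' (j + 1))) ∧
      -- s'_j agrees with s_j on every variable of W
      (∀ j ≤ k, ∀ v ∈ W, states' j v = states j v) ∧
      -- TR(ρ) = TR(ρ')
      (∀ j < k,
        refs (α (instrs j)) (states' j) = refs (instrs j) (states j) ∧
        exec (α (instrs j)) (states' j) = exec (instrs j) (states j)) :=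
  lemma1_slice_to_abstract_general Var D LI pc lbl step refs exec P Sl W hpcW next hNotSl hSlDep
    hSlBisim α hαSl hαNotSl k states instrs hrun
end

section
/- (Lemma 2.) Assume the slicing setup and the abstraction α. For every run ρ' = s₀ ι'₀ s'₁ ι'₁ ⋯ ι'_{k−1} s'_k of α(P) there exist (unique) instructions ι₀, …, ι_{k−1} ∈ P with ι'_j = α(ι_j) for every j, and there exist states s₁, …, s_k, such that ρ = s₀ ι₀ s₁ ι₁ ⋯ ι_{k−1} s_k is a run of P, s_j agrees with s'_j on every variable of W for every j ≤ k, and TR(ρ) = TR(ρ'), i.e., for every j < k, refs(ι_j)(s_j) = refs(α(ι_j))(s'_j) and exec(ι_j)(s_j) = exec(α(ι_j))(s'_j). -/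
/-- Lemma 2: every run of the abstracted program `α(P)` comes from a (unique) run of `P`
through α, starting from the same state, agreeing on `W`, with the same trace. -/
theorem lemma2_abstract_to_slice
    (Var D LI : Type) [Fintype Var] [Fintype D] [Fintype LI]
    [DecidableEq Var] [DecidableEq D] [DecidableEq LI]
    (pc : Var)
    (lbl : LI → D)
    (step : LI → (Var → D) → (Var → D) → Prop)
    (refs : LI → (Var → D) → Finset D)
    (exec : LI → (Var → D) → Bool)
    -- the program: finite set of labelled instructions with pairwise distinct labels
    (P : Finset LI)
    (hlbl : ∀ ι ∈ P, ∀ ι' ∈ P, lbl ι = lbl ι' → ι = ι')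
    -- slicing setup
    (Sl : Finset LI) (hSl : Sl ⊆ P)
    (W : Set Var) (hpcW : pc ∈ W)
    (next : D → D)
    -- (i) instructions outside the slice
    (hNotSl : ∀ ι ∈ P, ι ∉ Sl →
      (∀ s, refs ι s = ∅ ∧ exec ι s = true) ∧
      ∃ f : (Var → D) → (Var → D),
        (∀ s t, step ι s t ↔ t = f s) ∧
        (∀ s, (∀ v ∈ W, v ≠ pc → f s v = s v) ∧ f s pc = next (s pc)))
    -- (ii) instructions in the slice
    (hSlDep : ∀ ι ∈ Sl, ∀ s s' : Var → D, (∀ v ∈ W, s v = s' v) →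
      refs ι s = refs ι s' ∧ exec ι s = exec ι s')
    (hSlBisim : ∀ ι ∈ Sl, ∀ s s' t : Var → D, (∀ v ∈ W, s v = s' v) →
      step ι s t → ∃ t', step ι s' t' ∧ ∀ v ∈ W, t v = t' v)
    -- the abstraction α
    (α : LI → LI)
    (hαinj : ∀ ι ∈ P, ∀ ι' ∈ P, α ι = α ι' → ι = ι')
    (hαSl : ∀ ι ∈ Sl, α ι = ι)
    (hαNotSl : ∀ ι ∈ P, ι ∉ Sl →
      lbl (α ι) = lbl ι ∧
      (∀ s, refs (α ι) s = ∅ ∧ exec (α ι) s = true) ∧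
      (∀ s t : Var → D, step (α ι) s t ↔
        t = fun v => if v = pc then next (s pc) else s v))
    -- a run ρ' = s₀ ι'₀ s'₁ ι'₁ ⋯ ι'_{k-1} s'_k of α(P)
    (k : ℕ) (states' : ℕ → Var → D) (instrs' : ℕ → LI)
    (hrun' : ∀ j < k, instrs' j ∈ P.image α ∧ lbl (instrs' j) = states' j pc ∧
      step (instrs' j) (states' j) (states' (j + 1))) :
    ∃ (instrs : ℕ → LI) (states : ℕ → Var → D),
      -- the instructions of ρ' are the α-images of (unique) instructions of P
      (∀ j < k, instrs j ∈ P ∧ instrs' j = α (instrs j) ∧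
        ∀ ι ∈ P, α ι = instrs' j → ι = instrs j) ∧
      -- ρ = s₀ ι₀ s₁ ι₁ ⋯ ι_{k-1} s_k is a run of P
      states 0 = states' 0 ∧
      (∀ j < k, instrs j ∈ P ∧ lbl (instrs j) = states j pc ∧
        step (instrs j) (states j) (states (j + 1))) ∧
      -- s_j agrees with s'_j on every variable of W
      (∀ j ≤ k, ∀ v ∈ W, states j v = states' j v) ∧
      -- TR(ρ) = TR(ρ')
      (∀ j < k,
        refs (instrs j) (states j) = refs (instrs' j) (states' j) ∧
        exec (instrs j) (states j) = exec (instrs' j) (states' j)) := by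
  classical
  revert hrun'
  induction k with
  | zero =>
    intro hrun'
    exact ⟨instrs', states', fun j hj => absurd hj (Nat.not_lt_zero j), rfl,
      fun j hj => absurd hj (Nat.not_lt_zero j),
      fun j _ v _ => rfl,
      fun j hj => absurd hj (Nat.not_lt_zero j)⟩
  | succ k ih =>
    intro hrun'
    obtain ⟨instrs, states, h1, h2, h3, h4, h5⟩ :=
      ih (fun j hj => hrun' j (Nat.lt_succ_of_lt hj))
    obtain ⟨hmem, hlblk, hstepk⟩ := hrun' k (Nat.lt_succ_self k)
    obtain ⟨ι, hιP, hαι⟩ := Finset.mem_image.mp hmem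
    have hagree : ∀ v ∈ W, states k v = states' k v := h4 k le_rfl
    have key : ∃ t, step ι (states k) t ∧ (∀ v ∈ W, t v = states' (k+1) v) ∧
        lbl ι = states k pc ∧
        refs ι (states k) = refs (instrs' k) (states' k) ∧
        exec ι (states k) = exec (instrs' k) (states' k) := by
      by_cases hSlc : ι ∈ Sl
      · have he : instrs' k = ι := by rw [← hαι, hαSl ι hSlc]
        rw [he] at hstepk hlblk
        obtain ⟨t, ht1, ht2⟩ := hSlBisim ι hSlc (states' k) (states k) (states' (k+1))
          (fun v hv => (hagree v hv).symm) hstepk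
        refine ⟨t, ht1, fun v hv => (ht2 v hv).symm, ?_, ?_, ?_⟩
        · rw [hagree pc hpcW]; exact hlblk
        · rw [he]; exact (hSlDep ι hSlc (states k) (states' k) hagree).1
        · rw [he]; exact (hSlDep ι hSlc (states k) (states' k) hagree).2
      · obtain ⟨hre, f, hf, hfp⟩ := hNotSl ι hιP hSlc
        obtain ⟨hlblα, hreα, hstepα⟩ := hαNotSl ι hιP hSlc
        rw [← hαι] at hstepk hlblk
        have hs' : states' (k+1) = fun v => if v = pc then next (states' k pc) else states' k v :=
          (hstepα (states' k) (states' (k+1))).mp hstepk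
        refine ⟨f (states k), (hf _ _).mpr rfl, ?_, ?_, ?_, ?_⟩
        · intro v hv
          by_cases hvpc : v = pc
          · subst hvpc
            rw [hs', (hfp (states k)).2, hagree v hpcW]
            simp
          · rw [hs']; simp only [if_neg hvpc]
            rw [(hfp (states k)).1 v hv hvpc, hagree v hv]
        · rw [hagree pc hpcW, ← hlblα]; exact hlblk
        · rw [(hre (states k)).1, ← hαι, (hreα (states' k)).1]
        · rw [(hre (states k)).2, ← hαι, (hreα (states' k)).2]
    obtain ⟨t, ht, htW, hlblι, hrefs, hexec⟩ := key
    refine ⟨Function.update instrs k ι, Function.update states (k+1) t, ?_, ?_, ?_, ?_, ?_⟩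
    · intro j hj
      by_cases hj' : j = k
      · subst hj'
        rw [Function.update_self]
        exact ⟨hιP, hαι.symm, fun ι' hι' he => hαinj ι' hι' ι hιP (by rw [he, hαι])⟩
      · rw [Function.update_of_ne hj']
        exact h1 j (by omega)
    · rw [Function.update_of_ne (by omega : (0:ℕ) ≠ k+1)]; exact h2
    · intro j hj
      by_cases hj' : j = k
      · subst hj'
        rw [Function.update_self, Function.update_self,
          Function.update_of_ne (by omega : j ≠ j+1)]
        exact ⟨hιP, hlblι, ht⟩
      · rw [Function.update_of_ne hj', Function.update_of_ne (by omega : j ≠ k+1),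
          Function.update_of_ne (by omega : j+1 ≠ k+1)]
        exact h3 j (by omega)
    · intro j hj
      by_cases hj' : j = k+1
      · subst hj'
        rw [Function.update_self]
        exact htW
      · rw [Function.update_of_ne hj']
        exact h4 j (by omega)
    · intro j hj
      by_cases hj' : j = k
      · subst hj'
        rw [Function.update_self, Function.update_of_ne (by omega : j ≠ j+1)]
        exact ⟨hrefs, hexec⟩
      · rw [Function.update_of_ne hj', Function.update_of_ne (by omega : j ≠ k+1)]
        exact h5 j (by omega)
end

section
/- (Corollary of Lemmas 1 and 2: trace-language equality.) Assume the slicing setup and the abstraction α, fix an initial state s₀ and a set F ⊆ D of final labels, and let L⊥(P) denote the set of traces TR(ρ) of runs ρ of P from s₀ whose last state s_n satisfies s_n(pc) ∈ F, and similarly L⊥(α(P)) for α(P). Then L⊥(P) = L⊥(α(P)), where traces are identified after renaming first components through the bijection α. -/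
/-!
Each instruction of `P` and its abstraction simulate each other modulo agreement on `W`: a slice
instruction is fixed by `α` and is `W`-bisimulating, while outside the slice both the instruction
and its abstraction observe nothing and act on `W` only by advancing `pc`. Since `pc ∈ W`, a run of
either program is replayed step by step in the other with states kept equal on `W`, hence with the
same labels, referenced addresses and execution flags.
-/

/-- The trace language `L_{s₀}^F(Q)`: the set of traces of runs of the program `Q`
starting from the state `s₀` and whose last state has its `pc` value in `F`. -/
def TraceLang {Var D LI : Type} (pc : Var) (lbl : LI → D)
    (step : LI → (Var → D) → (Var → D) → Prop)
    (refs : LI → (Var → D) → Finset D)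
    (exec : LI → (Var → D) → Bool)
    (Q : Finset LI) (s₀ : Var → D) (F : Set D) :
    Set (List (LI × Finset D × Bool)) :=
  {w | ∃ (k : ℕ) (states : ℕ → Var → D) (instrs : ℕ → LI),
    (∀ j < k, instrs j ∈ Q ∧ lbl (instrs j) = states j pc ∧
      step (instrs j) (states j) (states (j + 1))) ∧
    states 0 = s₀ ∧ states k pc ∈ F ∧
    w = List.ofFn (fun j : Fin k =>
      (instrs j, refs (instrs j) (states j), exec (instrs j) (states j)))}

open Set

theorem exists_run_of_simulation {σ : Type*} (R : σ → σ → Prop) (step : ℕ → σ → σ → Prop)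
    (k : ℕ) (s : ℕ → σ)
    (hsim : ∀ j < k, ∀ t, R (s j) t → ∃ t', step j t t' ∧ R (s (j + 1)) t')
    (t₀ : σ) (h₀ : R (s 0) t₀) :
    ∃ t : ℕ → σ, t 0 = t₀ ∧ (∀ j ≤ k, R (s j) (t j)) ∧ ∀ j < k, step j (t j) (t (j + 1)) := by
  choose! g hg using hsim
  let t : ℕ → σ := fun n => Nat.rec t₀ (fun j x => g j x) n
  have hR : ∀ j ≤ k, R (s j) (t j) := by
    intro j hj
    induction j with
    | zero => exact h₀
    | succ j ih => exact (hg j hj _ (ih (by omega))).2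
  exact ⟨t, rfl, hR, fun j hj => (hg j hj _ (hR j hj.le)).1⟩

section Simulation

variable {Var D LI : Type} (pc : Var) (lbl : LI → D)
  (step : LI → (Var → D) → (Var → D) → Prop)
  (refs : LI → (Var → D) → Finset D) (exec : LI → (Var → D) → Bool) (W : Set Var)

structure Simulates (ι ι' : LI) : Prop where
  lbl_eq : lbl ι' = lbl ι
  refs_eq : ∀ ⦃s t⦄, EqOn s t W → refs ι' t = refs ι s
  exec_eq : ∀ ⦃s t⦄, EqOn s t W → exec ι' t = exec ι s
  step_sim : ∀ ⦃s t s'⦄, EqOn s t W → step ι s s' → ∃ t', step ι' t t' ∧ EqOn s' t' W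

variable {pc lbl step refs exec W}

theorem map_image_traceLang_subset (hpc : pc ∈ W) (β : LI → LI) {Q Q' : Finset LI}
    (hβ : ∀ ι ∈ Q, β ι ∈ Q' ∧ Simulates lbl step refs exec W ι (β ι))
    (s₀ : Var → D) (F : Set D) :
    List.map (Prod.map β id) '' TraceLang pc lbl step refs exec Q s₀ F ⊆
      TraceLang pc lbl step refs exec Q' s₀ F := by
  rintro _ ⟨_, ⟨k, s, ι, hrun, rfl, hF, rfl⟩, rfl⟩
  obtain ⟨t, ht₀, hst, hstep⟩ := exists_run_of_simulation (fun s t => EqOn s t W)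
    (fun j => step (β (ι j))) k s
    (fun j hj _ hs => (hβ _ (hrun j hj).1).2.step_sim hs (hrun j hj).2.2) (s 0) (eqOn_refl _ _)
  have hsim j (hj : j < k) := (hβ _ (hrun j hj).1).2
  refine ⟨k, t, β ∘ ι, fun j hj => ⟨(hβ _ (hrun j hj).1).1, ?_, hstep j hj⟩, ht₀, ?_, ?_⟩
  · rw [Function.comp_apply, (hsim j hj).lbl_eq, (hrun j hj).2.1, hst j hj.le hpc]
  · rwa [← hst k le_rfl hpc]
  · rw [List.map_ofFn]
    congr 1
    funext j
    simp [(hsim j j.2).refs_eq (hst j j.2.le), (hsim j j.2).exec_eq (hst j j.2.le)]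

theorem fst_mem_of_mem_traceLang {Q : Finset LI} {s₀ : Var → D} {F : Set D}
    {w : List (LI × Finset D × Bool)} (hw : w ∈ TraceLang pc lbl step refs exec Q s₀ F) :
    ∀ q ∈ w, q.1 ∈ Q := by
  obtain ⟨k, s, ι, hrun, -, -, rfl⟩ := hw
  intro q hq
  obtain ⟨j, rfl⟩ := List.mem_ofFn.1 hq
  exact (hrun j j.2).1

theorem traceLang_subset_map_image (hpc : pc ∈ W) (β : LI → LI) {Q Q' : Finset LI}
    (hβ : ∀ ι' ∈ Q', ∃ ι ∈ Q, β ι = ι' ∧ Simulates lbl step refs exec W ι' ι)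
    (s₀ : Var → D) (F : Set D) :
    TraceLang pc lbl step refs exec Q' s₀ F ⊆
      List.map (Prod.map β id) '' TraceLang pc lbl step refs exec Q s₀ F := by
  choose! γ hγQ hβγ hγsim using hβ
  intro w hw
  refine ⟨w.map (Prod.map γ id),
    map_image_traceLang_subset hpc γ (fun ι hι => ⟨hγQ ι hι, hγsim ι hι⟩) s₀ F ⟨w, hw, rfl⟩, ?_⟩
  rw [List.map_map]
  refine (List.map_congr_left fun q hq => ?_).trans (List.map_id w)
  obtain ⟨ι, obs⟩ := q
  simp [hβγ ι (fst_mem_of_mem_traceLang hw _ hq)]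

theorem simulates_self_of_bisim {ι : LI}
    (hobs : ∀ s s', EqOn s s' W → refs ι s = refs ι s' ∧ exec ι s = exec ι s')
    (hstep : ∀ s s' t, EqOn s s' W → step ι s t → ∃ t', step ι s' t' ∧ EqOn t t' W) :
    Simulates lbl step refs exec W ι ι where
  lbl_eq := rfl
  refs_eq s t h := (hobs s t h).1.symm
  exec_eq s t h := (hobs s t h).2.symm
  step_sim s t s' h := hstep s t s' h

def AdvancesPc (W : Set Var) (pc : Var) (next : D → D) (f : (Var → D) → Var → D) : Prop :=
  ∀ s, (∀ v ∈ W, v ≠ pc → f s v = s v) ∧ f s pc = next (s pc)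

variable {next : D → D}

theorem advancesPc_ite [DecidableEq Var] :
    AdvancesPc W pc next (fun s v => if v = pc then next (s pc) else s v) :=
  fun _ => ⟨fun _ _ hv => if_neg hv, if_pos rfl⟩

theorem AdvancesPc.eqOn {f g : (Var → D) → Var → D} (hf : AdvancesPc W pc next f)
    (hg : AdvancesPc W pc next g) (hpc : pc ∈ W) {s t : Var → D} (h : EqOn s t W) :
    EqOn (f s) (g t) W := by
  intro v hv
  by_cases hvpc : v = pc
  · subst hvpc
    rw [(hf s).2, (hg t).2, h hv]
  · rw [(hf s).1 v hv hvpc, (hg t).1 v hv hvpc, h hv]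

theorem simulates_of_advancesPc (hpc : pc ∈ W) {ι ι' : LI} {f g : (Var → D) → Var → D}
    (hlbl : lbl ι' = lbl ι)
    (hobs : ∀ s, refs ι s = ∅ ∧ exec ι s = true) (hobs' : ∀ s, refs ι' s = ∅ ∧ exec ι' s = true)
    (hf : ∀ s t, step ι s t ↔ t = f s) (hg : ∀ s t, step ι' s t ↔ t = g s)
    (hfpc : AdvancesPc W pc next f) (hgpc : AdvancesPc W pc next g) :
    Simulates lbl step refs exec W ι ι' where
  lbl_eq := hlbl
  refs_eq _ _ _ := (hobs' _).1.trans (hobs _).1.symm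
  exec_eq _ _ _ := (hobs' _).2.trans (hobs _).2.symm
  step_sim s t _ h hs := ⟨g t, (hg t _).2 rfl, (hf s _).1 hs ▸ hfpc.eqOn hgpc hpc h⟩

end Simulation

theorem trace_language_equality_general
    (Var D LI : Type)
    [DecidableEq Var] [DecidableEq LI]
    (pc : Var)
    (lbl : LI → D)
    (step : LI → (Var → D) → (Var → D) → Prop)
    (refs : LI → (Var → D) → Finset D)
    (exec : LI → (Var → D) → Bool)
    -- the program: finite set of labelled instructions with pairwise distinct labels
    (P : Finset LI)
    -- slicing setup
    (Sl : Finset LI)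
    (W : Set Var) (hpcW : pc ∈ W)
    (next : D → D)
    -- (i) instructions outside the slice
    (hNotSl : ∀ ι ∈ P, ι ∉ Sl →
      (∀ s, refs ι s = ∅ ∧ exec ι s = true) ∧
      ∃ f : (Var → D) → (Var → D),
        (∀ s t, step ι s t ↔ t = f s) ∧
        (∀ s, (∀ v ∈ W, v ≠ pc → f s v = s v) ∧ f s pc = next (s pc)))
    -- (ii) instructions in the slice
    (hSlDep : ∀ ι ∈ Sl, ∀ s s' : Var → D, (∀ v ∈ W, s v = s' v) →
      refs ι s = refs ι s' ∧ exec ι s = exec ι s')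
    (hSlBisim : ∀ ι ∈ Sl, ∀ s s' t : Var → D, (∀ v ∈ W, s v = s' v) →
      step ι s t → ∃ t', step ι s' t' ∧ ∀ v ∈ W, t v = t' v)
    -- the abstraction α
    (α : LI → LI)
    (hαSl : ∀ ι ∈ Sl, α ι = ι)
    (hαNotSl : ∀ ι ∈ P, ι ∉ Sl →
      lbl (α ι) = lbl ι ∧
      (∀ s, refs (α ι) s = ∅ ∧ exec (α ι) s = true) ∧
      (∀ s t : Var → D, step (α ι) s t ↔
        t = fun v => if v = pc then next (s pc) else s v))
    -- initial state and final labels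
    (s₀ : Var → D) (F : Set D) :
    (List.map (fun q : LI × Finset D × Bool => (α q.1, q.2.1, q.2.2))) ''
        (TraceLang pc lbl step refs exec P s₀ F)
      = TraceLang pc lbl step refs exec (P.image α) s₀ F := by
  have hsim : ∀ ι ∈ P, Simulates lbl step refs exec W ι (α ι) ∧
      Simulates lbl step refs exec W (α ι) ι := by
    intro ι hι
    by_cases hιSl : ι ∈ Sl
    · rw [hαSl ι hιSl]
      have h : Simulates lbl step refs exec W ι ι := simulates_self_of_bisim (hSlDep ι hιSl) (hSlBisim ι hιSl)
      exact ⟨h, h⟩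
    · obtain ⟨hobs, f, hf, hfpc⟩ := hNotSl ι hι hιSl
      obtain ⟨hlbl, hobsα, hstepα⟩ := hαNotSl ι hι hιSl
      exact ⟨simulates_of_advancesPc hpcW hlbl hobs hobsα hf hstepα hfpc advancesPc_ite,
        simulates_of_advancesPc hpcW hlbl.symm hobsα hobs hstepα hf advancesPc_ite hfpc⟩
  refine (map_image_traceLang_subset hpcW α
    (fun ι hι => ⟨Finset.mem_image_of_mem α hι, (hsim ι hι).1⟩) s₀ F).antisymm ?_
  refine traceLang_subset_map_image hpcW α (fun ι' hι' => ?_) s₀ F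
  obtain ⟨ι, hι, rfl⟩ := Finset.mem_image.1 hι'
  exact ⟨ι, hι, rfl, (hsim ι hι).2⟩

/-- Corollary of Lemmas 1 and 2: the trace languages of `P` and of the abstracted
program `α(P)` coincide, after renaming the first components of traces through α. -/
theorem trace_language_equality
    (Var D LI : Type) [Fintype Var] [Fintype D] [Fintype LI]
    [DecidableEq Var] [DecidableEq D] [DecidableEq LI]
    (pc : Var)
    (lbl : LI → D)
    (step : LI → (Var → D) → (Var → D) → Prop)
    (refs : LI → (Var → D) → Finset D)
    (exec : LI → (Var → D) → Bool)
    -- the program: finite set of labelled instructions with pairwise distinct labels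
    (P : Finset LI)
    (hlbl : ∀ ι ∈ P, ∀ ι' ∈ P, lbl ι = lbl ι' → ι = ι')
    -- slicing setup
    (Sl : Finset LI) (hSl : Sl ⊆ P)
    (W : Set Var) (hpcW : pc ∈ W)
    (next : D → D)
    -- (i) instructions outside the slice
    (hNotSl : ∀ ι ∈ P, ι ∉ Sl →
      (∀ s, refs ι s = ∅ ∧ exec ι s = true) ∧
      ∃ f : (Var → D) → (Var → D),
        (∀ s t, step ι s t ↔ t = f s) ∧
        (∀ s, (∀ v ∈ W, v ≠ pc → f s v = s v) ∧ f s pc = next (s pc)))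
    -- (ii) instructions in the slice
    (hSlDep : ∀ ι ∈ Sl, ∀ s s' : Var → D, (∀ v ∈ W, s v = s' v) →
      refs ι s = refs ι s' ∧ exec ι s = exec ι s')
    (hSlBisim : ∀ ι ∈ Sl, ∀ s s' t : Var → D, (∀ v ∈ W, s v = s' v) →
      step ι s t → ∃ t', step ι s' t' ∧ ∀ v ∈ W, t v = t' v)
    -- the abstraction α
    (α : LI → LI)
    (hαinj : ∀ ι ∈ P, ∀ ι' ∈ P, α ι = α ι' → ι = ι')
    (hαSl : ∀ ι ∈ Sl, α ι = ι)
    (hαNotSl : ∀ ι ∈ P, ι ∉ Sl →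
      lbl (α ι) = lbl ι ∧
      (∀ s, refs (α ι) s = ∅ ∧ exec (α ι) s = true) ∧
      (∀ s t : Var → D, step (α ι) s t ↔
        t = fun v => if v = pc then next (s pc) else s v))
    -- initial state and final labels
    (s₀ : Var → D) (F : Set D) :
    (List.map (fun q : LI × Finset D × Bool => (α q.1, q.2.1, q.2.2))) ''
        (TraceLang pc lbl step refs exec P s₀ F)
      = TraceLang pc lbl step refs exec (P.image α) s₀ F :=
  trace_language_equality_general Var D LI pc lbl step refs exec P Sl W hpcW next hNotSl hSlDep
    hSlBisim α hαSl hαNotSl s₀ F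
end

section
/- (Theorem: WCET-equivalence of the sliced program.) Assume the slicing setup and the abstraction α, fix an initial state s₀ and a set F ⊆ D of final labels, and let L⊥(P) denote the set of traces TR(ρ) of runs ρ of P from s₀ whose last state s_n satisfies s_n(pc) ∈ F, and similarly L⊥(α(P)) for α(P). Let time be any function assigning a natural number (the execution time on the hardware from a fixed initial hardware state) to each trace, invariant under renaming first components through the bijection α. If L⊥(P) is finite and nonempty, then L⊥(α(P)) is finite and nonempty and WCET⊥(P) = WCET⊥(α(P)), where WCET⊥(Q) denotes the maximum of time(w) over w ∈ L⊥(Q). -/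
/-- Theorem: the sliced (abstracted) program is WCET-equivalent to the original:
`WCET⊥(P, H) = WCET⊥(α(P), H)` for every trace-timing function invariant under
renaming first components through α. -/
theorem wcet_equivalence_of_slice
    (Var D LI : Type) [Fintype Var] [Fintype D] [Fintype LI]
    [DecidableEq Var] [DecidableEq D] [DecidableEq LI]
    (pc : Var)
    (lbl : LI → D)
    (step : LI → (Var → D) → (Var → D) → Prop)
    (refs : LI → (Var → D) → Finset D)
    (exec : LI → (Var → D) → Bool)
    -- the program: finite set of labelled instructions with pairwise distinct labels
    (P : Finset LI)
    (hlbl : ∀ ι ∈ P, ∀ ι' ∈ P, lbl ι = lbl ι' → ι = ι')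
    -- slicing setup
    (Sl : Finset LI) (hSl : Sl ⊆ P)
    (W : Set Var) (hpcW : pc ∈ W)
    (next : D → D)
    -- (i) instructions outside the slice
    (hNotSl : ∀ ι ∈ P, ι ∉ Sl →
      (∀ s, refs ι s = ∅ ∧ exec ι s = true) ∧
      ∃ f : (Var → D) → (Var → D),
        (∀ s t, step ι s t ↔ t = f s) ∧
        (∀ s, (∀ v ∈ W, v ≠ pc → f s v = s v) ∧ f s pc = next (s pc)))
    -- (ii) instructions in the slice
    (hSlDep : ∀ ι ∈ Sl, ∀ s s' : Var → D, (∀ v ∈ W, s v = s' v) →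
      refs ι s = refs ι s' ∧ exec ι s = exec ι s')
    (hSlBisim : ∀ ι ∈ Sl, ∀ s s' t : Var → D, (∀ v ∈ W, s v = s' v) →
      step ι s t → ∃ t', step ι s' t' ∧ ∀ v ∈ W, t v = t' v)
    -- the abstraction α
    (α : LI → LI)
    (hαinj : ∀ ι ∈ P, ∀ ι' ∈ P, α ι = α ι' → ι = ι')
    (hαSl : ∀ ι ∈ Sl, α ι = ι)
    (hαNotSl : ∀ ι ∈ P, ι ∉ Sl →
      lbl (α ι) = lbl ι ∧
      (∀ s, refs (α ι) s = ∅ ∧ exec (α ι) s = true) ∧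
      (∀ s t : Var → D, step (α ι) s t ↔
        t = fun v => if v = pc then next (s pc) else s v))
    -- initial state and final labels
    (s₀ : Var → D) (F : Set D)
    -- the execution-time function of the hardware, invariant under α-renaming
    (time : List (LI × Finset D × Bool) → ℕ)
    (htime : ∀ w, time (List.map (fun q : LI × Finset D × Bool => (α q.1, q.2.1, q.2.2)) w)
      = time w)
    -- L⊥(P) is finite and nonempty
    (hfin : (TraceLang pc lbl step refs exec P s₀ F).Finite)
    (hne : (TraceLang pc lbl step refs exec P s₀ F).Nonempty) :
    (TraceLang pc lbl step refs exec (P.image α) s₀ F).Finite ∧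
    (TraceLang pc lbl step refs exec (P.image α) s₀ F).Nonempty ∧
    sSup (time '' TraceLang pc lbl step refs exec P s₀ F)
      = sSup (time '' TraceLang pc lbl step refs exec (P.image α) s₀ F) := by
  classical
  -- label of α ι equals label of ι
  have hαlbl : ∀ ι ∈ P, lbl (α ι) = lbl ι := by
    intro ι hιP
    by_cases hsl : ι ∈ Sl
    · rw [hαSl ι hsl]
    · exact (hαNotSl ι hιP hsl).1
  -- refs/exec of α ι on a W-equivalent state equal those of ι
  have hre : ∀ ι ∈ P, ∀ s s' : Var → D, (∀ v ∈ W, s v = s' v) →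
      refs (α ι) s' = refs ι s ∧ exec (α ι) s' = exec ι s := by
    intro ι hιP s s' hss'
    by_cases hsl : ι ∈ Sl
    · rw [hαSl ι hsl]
      obtain ⟨h1, h2⟩ := hSlDep ι hsl s s' hss'
      exact ⟨h1.symm, h2.symm⟩
    · obtain ⟨h1, h2⟩ := (hNotSl ι hιP hsl).1 s
      obtain ⟨h3, h4⟩ := (hαNotSl ι hιP hsl).2.1 s'
      rw [h1, h2, h3, h4]; exact ⟨rfl, rfl⟩
  -- forward simulation: a run of P induces a run of α(P)
  have forward : ∀ (k : ℕ) (states : ℕ → Var → D) (instrs : ℕ → LI),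
      (∀ j < k, instrs j ∈ P ∧ step (instrs j) (states j) (states (j+1))) →
      ∃ states' : ℕ → Var → D, states' 0 = states 0 ∧
        (∀ j ≤ k, ∀ v ∈ W, states' j v = states j v) ∧
        (∀ j < k, step (α (instrs j)) (states' j) (states' (j+1))) := by
    intro k
    induction k with
    | zero =>
      intro states instrs _
      exact ⟨states, rfl, fun j _ v _ => rfl, fun j hj => absurd hj (Nat.not_lt_zero j)⟩
    | succ k ih =>
      intro states instrs h
      obtain ⟨S, hS0, hSW, hstep⟩ := ih states instrs
        (fun j hj => h j (Nat.lt_succ_of_lt hj))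
      obtain ⟨hmem, hstepk⟩ := h k (Nat.lt_succ_self k)
      have hagree : ∀ v ∈ W, states k v = S k v :=
        fun v hv => (hSW k le_rfl v hv).symm
      -- obtain the next abstract state t'
      have hnext : ∃ t' : Var → D, step (α (instrs k)) (S k) t' ∧
          ∀ v ∈ W, t' v = states (k+1) v := by
        by_cases hsl : instrs k ∈ Sl
        · obtain ⟨t', ht'step, ht'W⟩ :=
            hSlBisim (instrs k) hsl (states k) (S k) (states (k+1)) hagree hstepk
          rw [← hαSl (instrs k) hsl] at ht'step
          exact ⟨t', ht'step, fun v hv => (ht'W v hv).symm⟩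
        · obtain ⟨_, f, hf, hfprop⟩ := hNotSl (instrs k) hmem hsl
          have hstates1 : states (k+1) = f (states k) := (hf _ _).mp hstepk
          refine ⟨fun v => if v = pc then next (S k pc) else S k v,
            ((hαNotSl (instrs k) hmem hsl).2.2 _ _).mpr rfl, ?_⟩
          intro v hv
          show (if v = pc then next (S k pc) else S k v) = states (k+1) v
          by_cases hvpc : v = pc
          · rw [if_pos hvpc, hvpc, hstates1, (hfprop (states k)).2, hagree pc hpcW]
          · rw [if_neg hvpc, hstates1, (hfprop (states k)).1 v hv hvpc, hagree v hv]
      obtain ⟨t', ht'step, ht'W⟩ := hnext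
      refine ⟨Function.update S (k+1) t', ?_, ?_, ?_⟩
      · rw [Function.update_of_ne (by omega : (0:ℕ) ≠ k+1)]; exact hS0
      · intro j hj v hv
        by_cases hjk : j = k+1
        · rw [hjk, Function.update_self]; exact ht'W v hv
        · rw [Function.update_of_ne hjk]; exact hSW j (by omega) v hv
      · intro j hj
        by_cases hjk : j = k
        · rw [Function.update_of_ne (by omega : j ≠ k+1),
            (by omega : j + 1 = k + 1), Function.update_self, hjk]
          exact ht'step
        · rw [Function.update_of_ne (by omega : j ≠ k+1),
            Function.update_of_ne (by omega : j + 1 ≠ k+1)]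
          exact hstep j (by omega)
  -- backward simulation: a run of α(P) induces a run of P
  have backward : ∀ (k : ℕ) (states' : ℕ → Var → D) (instrs : ℕ → LI),
      (∀ j < k, instrs j ∈ P ∧ step (α (instrs j)) (states' j) (states' (j+1))) →
      ∃ states : ℕ → Var → D, states 0 = states' 0 ∧
        (∀ j ≤ k, ∀ v ∈ W, states j v = states' j v) ∧
        (∀ j < k, step (instrs j) (states j) (states (j+1))) := by
    intro k
    induction k with
    | zero =>
      intro states' instrs _
      exact ⟨states', rfl, fun j _ v _ => rfl, fun j hj => absurd hj (Nat.not_lt_zero j)⟩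
    | succ k ih =>
      intro states' instrs h
      obtain ⟨S, hS0, hSW, hstep⟩ := ih states' instrs
        (fun j hj => h j (Nat.lt_succ_of_lt hj))
      obtain ⟨hmem, hstepk⟩ := h k (Nat.lt_succ_self k)
      have hagree : ∀ v ∈ W, states' k v = S k v :=
        fun v hv => (hSW k le_rfl v hv).symm
      have hnext : ∃ t : Var → D, step (instrs k) (S k) t ∧
          ∀ v ∈ W, t v = states' (k+1) v := by
        by_cases hsl : instrs k ∈ Sl
        · rw [hαSl (instrs k) hsl] at hstepk
          obtain ⟨t, htstep, htW⟩ :=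
            hSlBisim (instrs k) hsl (states' k) (S k) (states' (k+1)) hagree hstepk
          exact ⟨t, htstep, fun v hv => (htW v hv).symm⟩
        · obtain ⟨_, f, hf, hfprop⟩ := hNotSl (instrs k) hmem hsl
          have hstates1 : states' (k+1) =
              fun v => if v = pc then next (states' k pc) else states' k v :=
            ((hαNotSl (instrs k) hmem hsl).2.2 _ _).mp hstepk
          refine ⟨f (S k), (hf _ _).mpr rfl, ?_⟩
          intro v hv
          rw [hstates1]
          show f (S k) v = (if v = pc then next (states' k pc) else states' k v)
          by_cases hvpc : v = pc
          · rw [if_pos hvpc, hvpc, (hfprop (S k)).2, hagree pc hpcW]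
          · rw [if_neg hvpc, (hfprop (S k)).1 v hv hvpc, ← hagree v hv]
      obtain ⟨t, htstep, htW⟩ := hnext
      refine ⟨Function.update S (k+1) t, ?_, ?_, ?_⟩
      · rw [Function.update_of_ne (by omega : (0:ℕ) ≠ k+1)]; exact hS0
      · intro j hj v hv
        by_cases hjk : j = k+1
        · rw [hjk, Function.update_self]; exact htW v hv
        · rw [Function.update_of_ne hjk]; exact hSW j (by omega) v hv
      · intro j hj
        by_cases hjk : j = k
        · rw [Function.update_of_ne (by omega : j ≠ k+1),
            (by omega : j + 1 = k + 1), Function.update_self, hjk]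
          exact htstep
        · rw [Function.update_of_ne (by omega : j ≠ k+1),
            Function.update_of_ne (by omega : j + 1 ≠ k+1)]
          exact hstep j (by omega)
  -- the key set equality
  have hEq : TraceLang pc lbl step refs exec (P.image α) s₀ F =
      (fun w => List.map (fun q : LI × Finset D × Bool => (α q.1, q.2.1, q.2.2)) w) ''
        TraceLang pc lbl step refs exec P s₀ F := by
    ext w'
    constructor
    · rintro ⟨k, states', instrs', hrun, h0, hF, hw⟩
      have hch : ∀ j, ∃ ι, j < k → ι ∈ P ∧ α ι = instrs' j := by
        intro j
        by_cases hj : j < k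
        · obtain ⟨ι, hιP, hιeq⟩ := Finset.mem_image.mp (hrun j hj).1
          exact ⟨ι, fun _ => ⟨hιP, hιeq⟩⟩
        · exact ⟨instrs' j, fun h => absurd h hj⟩
      choose ι hι using hch
      obtain ⟨states, h0', hW, hstep⟩ := backward k states' ι (by
        intro j hj
        refine ⟨(hι j hj).1, ?_⟩
        rw [(hι j hj).2]
        exact (hrun j hj).2.2)
      refine ⟨List.ofFn (fun j : Fin k =>
        (ι j, refs (ι j) (states j), exec (ι j) (states j))), ⟨k, states, ι, ?_, ?_, ?_, rfl⟩, ?_⟩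
      · intro j hj
        refine ⟨(hι j hj).1, ?_, hstep j hj⟩
        have := hαlbl (ι j) (hι j hj).1
        rw [(hι j hj).2] at this
        rw [← this, (hrun j hj).2.1, ← hW j (le_of_lt hj) pc hpcW]
      · rw [h0', h0]
      · rw [hW k le_rfl pc hpcW]; exact hF
      · show List.map _ _ = _
        rw [hw, List.map_ofFn]
        congr 1
        funext j
        have hmem := (hι j j.2).1
        have hre' := hre (ι j) hmem (states j) (states' j)
          (fun v hv => hW j (le_of_lt j.2) v hv)
        simp only [Function.comp]
        rw [← (hι j j.2).2, hre'.1, hre'.2]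
    · rintro ⟨w, ⟨k, states, instrs, hrun, h0, hF, hw⟩, hw'⟩
      obtain ⟨states', h0', hW, hstep⟩ := forward k states instrs
        (fun j hj => ⟨(hrun j hj).1, (hrun j hj).2.2⟩)
      refine ⟨k, states', fun j => α (instrs j), ?_, ?_, ?_, ?_⟩
      · intro j hj
        refine ⟨Finset.mem_image_of_mem α (hrun j hj).1, ?_, hstep j hj⟩
        rw [hαlbl (instrs j) (hrun j hj).1, (hrun j hj).2.1,
          ← hW j (le_of_lt hj) pc hpcW]
      · rw [h0', h0]
      · rw [hW k le_rfl pc hpcW]; exact hF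
      · rw [← hw', hw]
        show List.map _ _ = _
        rw [List.map_ofFn]
        congr 1
        funext j
        have hre' := hre (instrs j) (hrun j j.2).1 (states j) (states' j)
          (fun v hv => (hW j (le_of_lt j.2) v hv).symm)
        simp only [Function.comp]
        rw [hre'.1, hre'.2]
  have himg : time '' TraceLang pc lbl step refs exec (P.image α) s₀ F =
      time '' TraceLang pc lbl step refs exec P s₀ F := by
    rw [hEq, ← Set.image_comp]
    apply Set.image_congr
    intro w _
    exact htime w
  refine ⟨?_, ?_, ?_⟩
  · rw [hEq]; exact hfin.image _
  · rw [hEq]; exact hne.image _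
  · rw [himg]
end

section
/- (Property (π): soundness of the extended symbolic semantics.) Assume the extended-domain setup with the over-approximation hypothesis. Let s₀, t₀ be extended states with s₀ ⊑ t₀ and t₀(pc) = s₀(pc). Then for every run ρ = s₀ ι₀ s₁ ι₁ ⋯ ι_{n−1} s_n of P from s₀ there exists a run ρ' = t₀ ι₀ t₁ ι₁ ⋯ ι_{n−1} t_n of P from t₀ using the same instruction sequence, such that for every j ≤ n, s_j ⊑ t_j and t_j(pc) = s_j(pc), and TR(ρ) = TR(ρ'), i.e., for every j < n, refs(ι_j)(t_j) = refs(ι_j)(s_j) and exec(ι_j)(t_j) = exec(ι_j)(s_j). -/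
/-!
Build the abstract run step by step: once `t_j` over-approximates `s_j` with the same `pc`,
the instruction `ι_j` is enabled at `t_j` (its label is `s_j(pc) = t_j(pc)`), and the
over-approximation hypothesis applied to `s_j ⊑ t_j` and the concrete step `s_j → s_{j+1}`
yields `t_{j+1}` together with the equality of the trace entries.
-/

theorem exists_seq_of_forall_exists_step {α : Type*} (R : ℕ → α → Prop)
    (Step : ℕ → α → α → Prop) (n : ℕ)
    (hext : ∀ j < n, ∀ t, R j t → ∃ t', Step j t t' ∧ R (j + 1) t') (t₀ : α) (h₀ : R 0 t₀) :
    ∃ t : ℕ → α, t 0 = t₀ ∧ (∀ j < n, Step j (t j) (t (j + 1))) ∧ ∀ j ≤ n, R j (t j) := by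
  induction n with
  | zero =>
    refine ⟨fun _ => t₀, rfl, fun j hj => absurd hj j.not_lt_zero, fun j hj => ?_⟩
    obtain rfl : j = 0 := Nat.le_zero.mp hj
    exact h₀
  | succ n ih =>
    obtain ⟨t, ht₀, hstep, hR⟩ := ih fun j hj => hext j (Nat.lt_succ_of_lt hj)
    obtain ⟨t', hstep', hR'⟩ := hext n (Nat.lt_succ_self n) (t n) (hR n le_rfl)
    refine ⟨Function.update t (n + 1) t', by simpa using ht₀, fun j hj => ?_, fun j hj => ?_⟩
    · rcases Nat.lt_succ_iff_lt_or_eq.mp hj with hj | rfl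
      · rw [Function.update_of_ne (by omega), Function.update_of_ne (by omega)]
        exact hstep j hj
      · simpa using hstep'
    · rcases Nat.le_succ_iff.mp hj with hj | rfl
      · rw [Function.update_of_ne (by omega)]
        exact hR j hj
      · simpa using hR'

theorem property_pi_symbolic_soundness_general
    (Var D LI : Type)
    (pc : Var)
    (lbl : LI → Option D)
    (step : LI → (Var → Option D) → (Var → Option D) → Prop)
    (refs : LI → (Var → Option D) → Finset D)
    (exec : LI → (Var → Option D) → Bool)
    -- the program: finite set of labelled instructions with pairwise distinct labels
    (P : Finset LI)
    -- over-approximation hypothesis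
    (hover : ∀ ι ∈ P, ∀ s t u : Var → Option D,
      (∀ x, t x = none ∨ t x = s x) → step ι s u →
      ∃ u', step ι t u' ∧ (∀ x, u' x = none ∨ u' x = u x) ∧ u' pc = u pc ∧
        refs ι t = refs ι s ∧ exec ι t = exec ι s)
    -- two initial extended states with s₀ ⊑ t₀ and t₀(pc) = s₀(pc)
    (s₀ t₀ : Var → Option D)
    (hle : ∀ x, t₀ x = none ∨ t₀ x = s₀ x)
    (hpc : t₀ pc = s₀ pc)
    -- a run ρ = s₀ ι₀ s₁ ι₁ ⋯ ι_{n-1} s_n of P from s₀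
    (n : ℕ) (states : ℕ → Var → Option D) (instrs : ℕ → LI)
    (h0 : states 0 = s₀)
    (hrun : ∀ j < n, instrs j ∈ P ∧ lbl (instrs j) = states j pc ∧
      step (instrs j) (states j) (states (j + 1))) :
    ∃ tstates : ℕ → Var → Option D,
      -- ρ' = t₀ ι₀ t₁ ι₁ ⋯ ι_{n-1} t_n is a run of P from t₀
      tstates 0 = t₀ ∧
      (∀ j < n, instrs j ∈ P ∧ lbl (instrs j) = tstates j pc ∧
        step (instrs j) (tstates j) (tstates (j + 1))) ∧
      -- s_j ⊑ t_j and t_j(pc) = s_j(pc)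
      (∀ j ≤ n, (∀ x, tstates j x = none ∨ tstates j x = states j x) ∧
        tstates j pc = states j pc) ∧
      -- TR(ρ) = TR(ρ')
      (∀ j < n, refs (instrs j) (tstates j) = refs (instrs j) (states j) ∧
        exec (instrs j) (tstates j) = exec (instrs j) (states j)) := by
  have hext : ∀ j < n, ∀ t : Var → Option D,
      (∀ x, t x = none ∨ t x = states j x) ∧ t pc = states j pc →
      ∃ t', (step (instrs j) t t' ∧ refs (instrs j) t = refs (instrs j) (states j) ∧
          exec (instrs j) t = exec (instrs j) (states j)) ∧
        (∀ x, t' x = none ∨ t' x = states (j + 1) x) ∧ t' pc = states (j + 1) pc := by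
    rintro j hj t ⟨ht, -⟩
    obtain ⟨hP, -, hs⟩ := hrun j hj
    obtain ⟨t', hstep, ht', hpc', hrefs, hexec⟩ := hover _ hP _ t _ ht hs
    exact ⟨t', ⟨hstep, hrefs, hexec⟩, ht', hpc'⟩
  obtain ⟨t, ht₀, hstep, hR⟩ :=
    exists_seq_of_forall_exists_step _ _ n hext t₀ (h0 ▸ ⟨hle, hpc⟩)
  refine ⟨t, ht₀, fun j hj => ?_, hR, fun j hj => (hstep j hj).2⟩
  obtain ⟨hP, hlbl, -⟩ := hrun j hj
  exact ⟨hP, hlbl.trans (hR j hj.le).2.symm, (hstep j hj).1⟩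

/-- Property (π): soundness of the extended symbolic semantics.  Any run of `P`
from a state `s₀` is matched, from any more abstract state `t₀ ⊒ s₀` with the same
`pc`, by a run using the same instructions, whose states refine-dominate those of
the original run, agree on `pc`, and which has the same trace. -/
theorem property_pi_symbolic_soundness
    (Var D LI : Type) [Fintype Var] [Fintype D] [Fintype LI]
    (pc : Var)
    (lbl : LI → Option D)
    (step : LI → (Var → Option D) → (Var → Option D) → Prop)
    (refs : LI → (Var → Option D) → Finset D)
    (exec : LI → (Var → Option D) → Bool)
    -- the program: finite set of labelled instructions with pairwise distinct labels
    (P : Finset LI)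
    (hlbl : ∀ ι ∈ P, ∀ ι' ∈ P, lbl ι = lbl ι' → ι = ι')
    -- over-approximation hypothesis
    (hover : ∀ ι ∈ P, ∀ s t u : Var → Option D,
      (∀ x, t x = none ∨ t x = s x) → step ι s u →
      ∃ u', step ι t u' ∧ (∀ x, u' x = none ∨ u' x = u x) ∧ u' pc = u pc ∧
        refs ι t = refs ι s ∧ exec ι t = exec ι s)
    -- two initial extended states with s₀ ⊑ t₀ and t₀(pc) = s₀(pc)
    (s₀ t₀ : Var → Option D)
    (hle : ∀ x, t₀ x = none ∨ t₀ x = s₀ x)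
    (hpc : t₀ pc = s₀ pc)
    -- a run ρ = s₀ ι₀ s₁ ι₁ ⋯ ι_{n-1} s_n of P from s₀
    (n : ℕ) (states : ℕ → Var → Option D) (instrs : ℕ → LI)
    (h0 : states 0 = s₀)
    (hrun : ∀ j < n, instrs j ∈ P ∧ lbl (instrs j) = states j pc ∧
      step (instrs j) (states j) (states (j + 1))) :
    ∃ tstates : ℕ → Var → Option D,
      -- ρ' = t₀ ι₀ t₁ ι₁ ⋯ ι_{n-1} t_n is a run of P from t₀
      tstates 0 = t₀ ∧
      (∀ j < n, instrs j ∈ P ∧ lbl (instrs j) = tstates j pc ∧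
        step (instrs j) (tstates j) (tstates (j + 1))) ∧
      -- s_j ⊑ t_j and t_j(pc) = s_j(pc)
      (∀ j ≤ n, (∀ x, tstates j x = none ∨ tstates j x = states j x) ∧
        tstates j pc = states j pc) ∧
      -- TR(ρ) = TR(ρ')
      (∀ j < n, refs (instrs j) (tstates j) = refs (instrs j) (states j) ∧
        exec (instrs j) (tstates j) = exec (instrs j) (states j)) :=
  property_pi_symbolic_soundness_general Var D LI pc lbl step refs exec P hover s₀ t₀ hle hpc n
    states instrs h0 hrun
end

section
/- (Equation (2): the symbolic WCET over-approximates the concrete WCET.) Assume the extended-domain setup with the over-approximation hypothesis. Fix a finite set I of initial extended states, an extended state t₀ with s₀ ⊑ t₀ and t₀(pc) = s₀(pc) for every s₀ ∈ I, and a set F of final pc-values; let L_I^F(P) be the set of traces of runs of P starting from some state of I and whose last state s_n satisfies s_n(pc) ∈ F, and let L⊥(P) be the set of traces of runs of P from t₀ whose last state satisfies the same final condition. Then L_I^F(P) ⊆ L⊥(P); consequently, for every function time assigning a natural number to each trace, if L_I^F(P) is nonempty and L⊥(P) is finite, then WCET(P) ≤ WCET⊥(P), where WCET(P) is the maximum of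 time over L_I^F(P) and WCET⊥(P) is the maximum of time over L⊥(P). -/
/-!
Lock-step simulation: along a concrete run, the over-approximation hypothesis lets the symbolic
run from `t₀` take the same instruction at every step while staying above the concrete state in
the refinement order with the same `pc`. Equal `pc`s make the same instruction enabled, and the
hypothesis makes `refs` and `exec` agree, so both runs have the same trace. The WCET bound is then
monotonicity of `sSup` on sets of naturals bounded by the finite symbolic language.
-/

/-- The trace language of runs of `Q` starting from a state of `I` and ending in a
state whose `pc`-value lies in `F` (extended-domain states `Var → Option D`). -/
def TraceLangFrom {Var D LI : Type} (pc : Var) (lbl : LI → Option D)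
    (step : LI → (Var → Option D) → (Var → Option D) → Prop)
    (refs : LI → (Var → Option D) → Finset D)
    (exec : LI → (Var → Option D) → Bool)
    (Q : Finset LI) (I : Set (Var → Option D)) (F : Set (Option D)) :
    Set (List (LI × Finset D × Bool)) :=
  {w | ∃ (k : ℕ) (states : ℕ → Var → Option D) (instrs : ℕ → LI),
    (∀ j < k, instrs j ∈ Q ∧ lbl (instrs j) = states j pc ∧
      step (instrs j) (states j) (states (j + 1))) ∧
    states 0 ∈ I ∧ states k pc ∈ F ∧
    w = List.ofFn (fun j : Fin k =>
      (instrs j, refs (instrs j) (states j), exec (instrs j) (states j)))}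

section Simulation

variable {Var D LI : Type} {pc : Var} {lbl : LI → Option D}
  {step : LI → (Var → Option D) → (Var → Option D) → Prop}
  {refs : LI → (Var → Option D) → Finset D} {exec : LI → (Var → Option D) → Bool}
  {P : Finset LI}

/-- `Refines s t` is the paper's `s ⊑ t`. -/
def Refines (s t : Var → Option D) : Prop := ∀ x, t x = none ∨ t x = s x

variable (pc step refs exec P) in
def StepOverApprox : Prop :=
  ∀ ι ∈ P, ∀ s t u : Var → Option D, Refines s t → step ι s u →
    ∃ u', step ι t u' ∧ Refines u u' ∧ u' pc = u pc ∧ refs ι t = refs ι s ∧ exec ι t = exec ι s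

theorem exists_refining_run (hover : StepOverApprox pc step refs exec P) {k : ℕ}
    {states : ℕ → Var → Option D} {instrs : ℕ → LI}
    (hsteps : ∀ j < k, instrs j ∈ P ∧ step (instrs j) (states j) (states (j + 1)))
    {t₀ : Var → Option D} (h₀ : Refines (states 0) t₀) (hpc₀ : t₀ pc = states 0 pc) :
    ∃ T : ℕ → Var → Option D, T 0 = t₀ ∧
      (∀ j < k, step (instrs j) (T j) (T (j + 1))) ∧
      ∀ j ≤ k, Refines (states j) (T j) ∧ T j pc = states j pc := by
  induction k with
  | zero =>
    refine ⟨fun _ => t₀, rfl, by simp, fun j hj => ?_⟩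
    obtain rfl := Nat.le_zero.1 hj
    exact ⟨h₀, hpc₀⟩
  | succ k ih =>
    obtain ⟨T, hT₀, hTstep, hTref⟩ := ih fun j hj => hsteps j (by omega)
    obtain ⟨hmem, hstep⟩ := hsteps k k.lt_succ_self
    obtain ⟨u, hu, huref, hupc, -⟩ := hover _ hmem _ _ _ (hTref k le_rfl).1 hstep
    refine ⟨Function.update T (k + 1) u, by simpa using hT₀, fun j hj => ?_, fun j hj => ?_⟩
    · rcases Nat.lt_succ_iff_lt_or_eq.1 hj with hj | rfl
      · simpa [Function.update_apply, hj.ne, show j ≠ k + 1 by omega] using hTstep j hj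
      · simpa using hu
    · rcases Nat.le_succ_iff.1 hj with hj | rfl
      · simpa [Function.update_apply, show j ≠ k + 1 by omega] using hTref j hj
      · simpa using ⟨huref, hupc⟩

theorem traceLangFrom_subset_singleton (hover : StepOverApprox pc step refs exec P)
    {I : Set (Var → Option D)} {F : Set (Option D)} {t₀ : Var → Option D}
    (ht₀ : ∀ s₀ ∈ I, Refines s₀ t₀ ∧ t₀ pc = s₀ pc) :
    TraceLangFrom pc lbl step refs exec P I F ⊆ TraceLangFrom pc lbl step refs exec P {t₀} F := by
  rintro w ⟨k, states, instrs, hsteps, hinit, hfin, rfl⟩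
  obtain ⟨T, rfl, hTstep, hTref⟩ := exists_refining_run hover
    (fun j hj => ⟨(hsteps j hj).1, (hsteps j hj).2.2⟩) (ht₀ _ hinit).1 (ht₀ _ hinit).2
  refine ⟨k, T, instrs, fun j hj => ?_, rfl, (hTref k le_rfl).2 ▸ hfin, ?_⟩
  · obtain ⟨hmem, hlbl, -⟩ := hsteps j hj
    exact ⟨hmem, hlbl.trans (hTref j hj.le).2.symm, hTstep j hj⟩
  · refine congrArg List.ofFn (funext fun j => ?_)
    obtain ⟨hmem, -, hstep⟩ := hsteps j j.2
    obtain ⟨-, -, -, -, hrefs, hexec⟩ := hover _ hmem _ _ _ (hTref j j.2.le).1 hstep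
    rw [hrefs, hexec]

end Simulation

theorem symbolic_wcet_overapproximates_general
    (Var D LI : Type)
    (pc : Var)
    (lbl : LI → Option D)
    (step : LI → (Var → Option D) → (Var → Option D) → Prop)
    (refs : LI → (Var → Option D) → Finset D)
    (exec : LI → (Var → Option D) → Bool)
    -- the program: finite set of labelled instructions with pairwise distinct labels
    (P : Finset LI)
    -- over-approximation hypothesis
    (hover : ∀ ι ∈ P, ∀ s t u : Var → Option D,
      (∀ x, t x = none ∨ t x = s x) → step ι s u →
      ∃ u', step ι t u' ∧ (∀ x, u' x = none ∨ u' x = u x) ∧ u' pc = u pc ∧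
        refs ι t = refs ι s ∧ exec ι t = exec ι s)
    -- finite set of initial states, dominated by the symbolic initial state t₀
    (I : Set (Var → Option D))
    (t₀ : Var → Option D)
    (ht₀ : ∀ s₀ ∈ I, (∀ x, t₀ x = none ∨ t₀ x = s₀ x) ∧ t₀ pc = s₀ pc)
    -- final pc-values
    (F : Set (Option D)) :
    TraceLangFrom pc lbl step refs exec P I F
        ⊆ TraceLangFrom pc lbl step refs exec P {t₀} F ∧
    ∀ time : List (LI × Finset D × Bool) → ℕ,
      (TraceLangFrom pc lbl step refs exec P I F).Nonempty →
      (TraceLangFrom pc lbl step refs exec P {t₀} F).Finite →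
      sSup (time '' TraceLangFrom pc lbl step refs exec P I F)
        ≤ sSup (time '' TraceLangFrom pc lbl step refs exec P {t₀} F) := by
  have hsub := traceLangFrom_subset_singleton (lbl := lbl) (F := F) hover ht₀
  exact ⟨hsub, fun time hne hfin =>
    csSup_le_csSup (hfin.image time).bddAbove (hne.image time) (Set.image_mono hsub)⟩

/-- Equation (2): the symbolic trace language over-approximates the concrete one,
hence the symbolic WCET over-approximates the concrete WCET. -/
theorem symbolic_wcet_overapproximates
    (Var D LI : Type) [Fintype Var] [Fintype D] [Fintype LI]
    (pc : Var)
    (lbl : LI → Option D)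
    (step : LI → (Var → Option D) → (Var → Option D) → Prop)
    (refs : LI → (Var → Option D) → Finset D)
    (exec : LI → (Var → Option D) → Bool)
    -- the program: finite set of labelled instructions with pairwise distinct labels
    (P : Finset LI)
    (hlbl : ∀ ι ∈ P, ∀ ι' ∈ P, lbl ι = lbl ι' → ι = ι')
    -- over-approximation hypothesis
    (hover : ∀ ι ∈ P, ∀ s t u : Var → Option D,
      (∀ x, t x = none ∨ t x = s x) → step ι s u →
      ∃ u', step ι t u' ∧ (∀ x, u' x = none ∨ u' x = u x) ∧ u' pc = u pc ∧
        refs ι t = refs ι s ∧ exec ι t = exec ι s)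
    -- finite set of initial states, dominated by the symbolic initial state t₀
    (I : Set (Var → Option D)) (hI : I.Finite)
    (t₀ : Var → Option D)
    (ht₀ : ∀ s₀ ∈ I, (∀ x, t₀ x = none ∨ t₀ x = s₀ x) ∧ t₀ pc = s₀ pc)
    -- final pc-values
    (F : Set (Option D)) :
    TraceLangFrom pc lbl step refs exec P I F
        ⊆ TraceLangFrom pc lbl step refs exec P {t₀} F ∧
    ∀ time : List (LI × Finset D × Bool) → ℕ,
      (TraceLangFrom pc lbl step refs exec P I F).Nonempty →
      (TraceLangFrom pc lbl step refs exec P {t₀} F).Finite →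
      sSup (time '' TraceLangFrom pc lbl step refs exec P I F)
        ≤ sSup (time '' TraceLangFrom pc lbl step refs exec P {t₀} F) :=
  symbolic_wcet_overapproximates_general Var D LI pc lbl step refs exec P hover I t₀ ht₀ F
end
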